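/- Assume N ≥ 2, τ > 1/(N−1), N > 1 + 1/τ, C > 0 and H > 0. Let n* = N if C ≥ H and n* = min{ N, ⌈1/((1−C/H)·τ)⌉ } if C < H, and let n^opt be any minimizer of the social cost S(n) = C·(N−n) + n·H·v(n) over {0,…,N}. Then the Price of Anarchy satisfies 1 ≤ S(n*)/S(n^opt) ≤ 1/(1 − (1 + 1/τ)/N). -/

import Mathlib

/-!
Write `m = min C H`. Since `n · (1 − v(n)) ≤ 1 + 1/τ` for every `n`, every profile costs at
least `m · (N − 1 − 1/τ)`: each node pays at least `m` times its infection probability or one,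
and the `n` non-investors together escape at most `1 + 1/τ` of that. The Nash profile `n*`
costs at most `m · N`: if `H ≤ C` nobody pays more than `H`, and if `C < H` the choice of `n*`
makes `H · v(n*) ≤ C`, so nobody pays more than `C`. The two bounds have ratio
`1 / (1 − (1 + 1/τ)/N)`.
-/

noncomputable def nimfaComplete (τ : ℝ) (n : ℕ) : ℝ :=
  if 2 ≤ n ∧ 1 ≤ τ * ((n : ℝ) - 1) then 1 - 1 / (τ * ((n : ℝ) - 1)) else 0

noncomputable def socialCost (C H : ℝ) (N : ℕ) (v : ℕ → ℝ) (n : ℕ) : ℝ :=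
  C * ((N : ℝ) - n) + n * H * v n

namespace nimfaComplete

variable {τ : ℝ}

lemma nonneg (n : ℕ) : 0 ≤ nimfaComplete τ n := by
  unfold nimfaComplete
  split_ifs with h
  · have : 1 / (τ * ((n : ℝ) - 1)) ≤ 1 := by rw [div_le_one (by linarith)]; exact h.2
    linarith
  · rfl

lemma le_one (n : ℕ) : nimfaComplete τ n ≤ 1 := by
  unfold nimfaComplete
  split_ifs with h
  · have : 0 ≤ 1 / (τ * ((n : ℝ) - 1)) := one_div_nonneg.mpr (by linarith [h.2])
    linarith
  · exact zero_le_one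

lemma mul_one_sub_le (hτ : 0 < τ) (n : ℕ) : n * (1 - nimfaComplete τ n) ≤ 1 + 1 / τ := by
  have hτinv : 0 < 1 / τ := one_div_pos.mpr hτ
  unfold nimfaComplete
  split_ifs with h
  · obtain ⟨-, hx⟩ := h
    have hxpos : 0 < τ * ((n : ℝ) - 1) := by linarith
    -- `n / (τ (n − 1)) = 1/τ + 1/(τ (n − 1))` and the last term is at most `1`
    have hexpand :
        (1 + 1 / τ) * (τ * ((n : ℝ) - 1)) = τ * ((n : ℝ) - 1) + ((n : ℝ) - 1) := by
      field_simp
    rw [sub_sub_cancel, mul_one_div, div_le_iff₀ hxpos, hexpand]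
    linarith
  · rw [sub_zero, mul_one]
    by_cases h2 : 2 ≤ n
    · have hlt : τ * ((n : ℝ) - 1) < 1 := not_le.mp fun h' => h ⟨h2, h'⟩
      have : (n : ℝ) - 1 < 1 / τ := by rw [lt_div_iff₀ hτ]; linarith
      linarith
    · have : (n : ℝ) ≤ 1 := by exact_mod_cast (by omega : n ≤ 1)
      linarith

lemma mul_le_of_le_ceil {C H : ℝ} (hτ : 0 < τ) (hC : 0 ≤ C) (hH : 0 < H) (hCH : C < H)
    {n : ℕ} (hn : n ≤ ⌈1 / ((1 - C / H) * τ)⌉₊) : H * nimfaComplete τ n ≤ C := by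
  have hq : 0 < 1 - C / H := by rw [sub_pos, div_lt_one hH]; exact hCH
  have hnR : ((n : ℝ) - 1) * ((1 - C / H) * τ) < 1 := by
    have := Nat.ceil_lt_add_one (one_div_pos.mpr (mul_pos hq hτ)).le
    have : (n : ℝ) ≤ ⌈1 / ((1 - C / H) * τ)⌉₊ := by exact_mod_cast hn
    rw [← lt_div_iff₀ (mul_pos hq hτ)]
    linarith
  unfold nimfaComplete
  split_ifs with h
  · have hxpos : 0 < τ * ((n : ℝ) - 1) := by linarith [h.2]
    have hsmall : 1 - C / H ≤ 1 / (τ * ((n : ℝ) - 1)) := by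
      rw [le_div_iff₀ hxpos]
      linarith
    calc H * (1 - 1 / (τ * ((n : ℝ) - 1))) ≤ H * (1 - (1 - C / H)) := by gcongr
      _ = C := by field_simp; ring
  · rwa [mul_zero]

end nimfaComplete

section socialCost

variable {C H : ℝ} {N : ℕ} {v : ℕ → ℝ}

lemma min_mul_le_socialCost {n : ℕ} (hn : n ≤ N) (hv : 0 ≤ v n) :
    min C H * ((N : ℝ) - n + n * v n) ≤ socialCost C H N v n := by
  have hnN : (n : ℝ) ≤ N := by exact_mod_cast hn
  have hC : min C H * ((N : ℝ) - n) ≤ C * ((N : ℝ) - n) :=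
    mul_le_mul_of_nonneg_right (min_le_left C H) (by linarith)
  have hH : min C H * (n * v n) ≤ H * (n * v n) :=
    mul_le_mul_of_nonneg_right (min_le_right C H) (mul_nonneg n.cast_nonneg hv)
  unfold socialCost
  linarith

lemma socialCost_le_of_mul_le {n : ℕ} (hHv : H * v n ≤ C) :
    socialCost C H N v n ≤ C * N := by
  have := mul_le_mul_of_nonneg_left hHv (n.cast_nonneg : (0 : ℝ) ≤ n)
  unfold socialCost
  linarith

lemma socialCost_self_le (hH : 0 ≤ H) (hv : v N ≤ 1) : socialCost C H N v N ≤ H * N := by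
  have := mul_le_mul_of_nonneg_left hv (mul_nonneg N.cast_nonneg hH)
  unfold socialCost
  linarith

end socialCost

theorem stmt_4_general (τ C H : ℝ) (hτpos : 0 < τ) (hC : 0 < C) (hH : 0 < H)
    (N : ℕ) (hNτ : 1 + 1 / τ < (N : ℝ))
    (v : ℕ → ℝ)
    (hv : ∀ n : ℕ, v n = if 2 ≤ n ∧ 1 ≤ τ * ((n : ℝ) - 1)
      then 1 - 1 / (τ * ((n : ℝ) - 1)) else 0)
    (S : ℕ → ℝ)
    (hS : ∀ n : ℕ, S n = C * ((N : ℝ) - (n : ℝ)) + (n : ℝ) * H * v n)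
    (nstar : ℕ)
    (hnstar : nstar = if H ≤ C then N else min N ⌈1 / ((1 - C / H) * τ)⌉₊)
    (nopt : ℕ) (hnoptN : nopt ≤ N)
    (hnopt : ∀ m : ℕ, m ≤ N → S nopt ≤ S m) :
    1 ≤ S nstar / S nopt ∧ S nstar / S nopt ≤ 1 / (1 - (1 + 1 / τ) / (N : ℝ)) := by
  obtain rfl : v = nimfaComplete τ := funext hv
  obtain rfl : S = socialCost C H N (nimfaComplete τ) := funext hS
  have hm : 0 < min C H := lt_min hC hH
  have hgap : 0 < (N : ℝ) - 1 - 1 / τ := by linarith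
  have hlower :
      min C H * ((N : ℝ) - 1 - 1 / τ) ≤ socialCost C H N (nimfaComplete τ) nopt := by
    refine le_trans ?_ (min_mul_le_socialCost hnoptN (nimfaComplete.nonneg nopt))
    have := nimfaComplete.mul_one_sub_le hτpos nopt
    gcongr; linarith
  have hopt : 0 < socialCost C H N (nimfaComplete τ) nopt := (mul_pos hm hgap).trans_le hlower
  have hupper : socialCost C H N (nimfaComplete τ) nstar ≤ min C H * N := by
    rcases le_or_gt H C with hHC | hCH
    · rw [hnstar, if_pos hHC, min_eq_right hHC]
      exact socialCost_self_le hH.le (nimfaComplete.le_one N)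
    · rw [hnstar, if_neg hCH.not_ge, min_eq_left hCH.le]
      exact socialCost_le_of_mul_le
        (nimfaComplete.mul_le_of_le_ceil hτpos hC.le hH hCH (min_le_right _ _))
  have hnstarN : nstar ≤ N := by rw [hnstar]; split_ifs <;> simp
  refine ⟨(one_le_div hopt).mpr (hnopt nstar hnstarN), ?_⟩
  calc socialCost C H N (nimfaComplete τ) nstar / socialCost C H N (nimfaComplete τ) nopt
      ≤ min C H * N / (min C H * ((N : ℝ) - 1 - 1 / τ)) :=
        div_le_div₀ (by positivity) hupper (mul_pos hm hgap) hlower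
    _ = 1 / (1 - (1 + 1 / τ) / (N : ℝ)) := by
      have : (N : ℝ) ≠ 0 := (by linarith [one_div_pos.mpr hτpos] : (0 : ℝ) < N).ne'
      field_simp
      ring

/-- bounds on the Price of Anarchy in the complete graph:
1 ≤ S(n*)/S(n^opt) ≤ 1/(1 − (1 + 1/τ)/N). -/
theorem stmt_4 (τ C H : ℝ) (hτpos : 0 < τ) (hC : 0 < C) (hH : 0 < H)
    (N : ℕ) (hN : 2 ≤ N) (hτ : 1 / ((N : ℝ) - 1) < τ) (hNτ : 1 + 1 / τ < (N : ℝ))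
    (v : ℕ → ℝ)
    (hv : ∀ n : ℕ, v n = if 2 ≤ n ∧ 1 ≤ τ * ((n : ℝ) - 1)
      then 1 - 1 / (τ * ((n : ℝ) - 1)) else 0)
    (S : ℕ → ℝ)
    (hS : ∀ n : ℕ, S n = C * ((N : ℝ) - (n : ℝ)) + (n : ℝ) * H * v n)
    (nstar : ℕ)
    (hnstar : nstar = if H ≤ C then N else min N ⌈1 / ((1 - C / H) * τ)⌉₊)
    (nopt : ℕ) (hnoptN : nopt ≤ N)
    (hnopt : ∀ m : ℕ, m ≤ N → S nopt ≤ S m) :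
    1 ≤ S nstar / S nopt ∧ S nstar / S nopt ≤ 1 / (1 - (1 + 1 / τ) / (N : ℝ)) :=
  stmt_4_general τ C H hτpos hC hH N hNτ v hv S hS nstar hnstar nopt hnoptN hnopt
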